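/- Let p, p̂, p₁, p̂₁, p₂, p̂₂ ∈ [0,1] and v₁, v₂, v̂₁, v̂₂ ∈ [0,1] with v₁ + v₂ = 1 and v̂₁ + v̂₂ = 1. Then |[2p(1−p) − 2v₁p₁(1−p₁) − 2v₂p₂(1−p₂)] − [2p̂(1−p̂) − 2v̂₁p̂₁(1−p̂₁) − 2v̂₂p̂₂(1−p̂₂)]| ≤ 2|p − p̂| + (1/2)|v₁ − v̂₁| + 2v₁|p₁ − p̂₁| + (1/2)|v₂ − v̂₂| + 2v₂|p₂ − p̂₂|. -/

import Mathlib

/-! Expanding `gini a - gini b = 2 (a - b) (1 - a - b)` shows that the Gini impurity is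
`2`-Lipschitz on `[0, 1]`, where it is also bounded by `1/2`. Writing each weighted child term as
`v gini a - w gini b = v (gini a - gini b) + (v - w) gini b` then bounds the perturbation of the
impurity decrease term by term. -/

namespace Gini

def gini (p : ℝ) : ℝ := 2 * p * (1 - p)

/-- The decrease of Gini impurity when a node with class-1 mean `p` is split into children of
weights `v₁, v₂` and class-1 means `p₁, p₂`. -/
def impurityDecrease (p v₁ p₁ v₂ p₂ : ℝ) : ℝ := gini p - v₁ * gini p₁ - v₂ * gini p₂

lemma gini_sub_gini (a b : ℝ) : gini a - gini b = 2 * (a - b) * (1 - a - b) := by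
  unfold gini; ring

lemma gini_nonneg {p : ℝ} (hp : p ∈ Set.Icc (0 : ℝ) 1) : 0 ≤ gini p := by
  unfold gini; nlinarith [hp.1, hp.2]

lemma gini_le_half (p : ℝ) : gini p ≤ 1 / 2 := by
  unfold gini; nlinarith [sq_nonneg (p - 1 / 2)]

lemma abs_gini_sub_gini_le {a b : ℝ} (ha : a ∈ Set.Icc (0 : ℝ) 1) (hb : b ∈ Set.Icc (0 : ℝ) 1) :
    |gini a - gini b| ≤ 2 * |a - b| := by
  have h : |1 - a - b| ≤ 1 := abs_le.mpr ⟨by linarith [ha.2, hb.2], by linarith [ha.1, hb.1]⟩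
  calc |gini a - gini b| = 2 * |a - b| * |1 - a - b| := by
        rw [gini_sub_gini, abs_mul, abs_mul, abs_two]
    _ ≤ 2 * |a - b| := mul_le_of_le_one_right (by positivity) h

lemma abs_mul_gini_sub_mul_gini_le {v w a b : ℝ} (hv : 0 ≤ v) (ha : a ∈ Set.Icc (0 : ℝ) 1)
    (hb : b ∈ Set.Icc (0 : ℝ) 1) :
    |v * gini a - w * gini b| ≤ 2 * v * |a - b| + 1 / 2 * |v - w| := by
  have hgb : |gini b| ≤ 1 / 2 := by rw [abs_of_nonneg (gini_nonneg hb)]; exact gini_le_half b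
  calc |v * gini a - w * gini b| = |v * (gini a - gini b) + (v - w) * gini b| := by
        congr 1; ring
    _ ≤ v * |gini a - gini b| + |v - w| * |gini b| :=
        (abs_add_le _ _).trans_eq (by rw [abs_mul, abs_mul, abs_of_nonneg hv])
    _ ≤ v * (2 * |a - b|) + |v - w| * (1 / 2) := by
        gcongr
        exact abs_gini_sub_gini_le ha hb
    _ = 2 * v * |a - b| + 1 / 2 * |v - w| := by ring

lemma abs_impurityDecrease_sub_le {p q v₁ w₁ p₁ q₁ v₂ w₂ p₂ q₂ : ℝ}
    (hp : p ∈ Set.Icc (0 : ℝ) 1) (hq : q ∈ Set.Icc (0 : ℝ) 1)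
    (hp₁ : p₁ ∈ Set.Icc (0 : ℝ) 1) (hq₁ : q₁ ∈ Set.Icc (0 : ℝ) 1)
    (hp₂ : p₂ ∈ Set.Icc (0 : ℝ) 1) (hq₂ : q₂ ∈ Set.Icc (0 : ℝ) 1)
    (hv₁ : 0 ≤ v₁) (hv₂ : 0 ≤ v₂) :
    |impurityDecrease p v₁ p₁ v₂ p₂ - impurityDecrease q w₁ q₁ w₂ q₂|
      ≤ 2 * |p - q| + 1 / 2 * |v₁ - w₁| + 2 * v₁ * |p₁ - q₁|
          + 1 / 2 * |v₂ - w₂| + 2 * v₂ * |p₂ - q₂| := by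
  have h₀ := abs_le.mp (abs_gini_sub_gini_le hp hq)
  have h₁ := abs_le.mp (abs_mul_gini_sub_mul_gini_le (w := w₁) hv₁ hp₁ hq₁)
  have h₂ := abs_le.mp (abs_mul_gini_sub_mul_gini_le (w := w₂) hv₂ hp₂ hq₂)
  unfold impurityDecrease
  exact abs_le.mpr ⟨by linarith, by linarith⟩

end Gini

open Gini in
theorem stmt17_general (p phat p₁ phat₁ p₂ phat₂ v₁ v₂ vhat₁ vhat₂ : ℝ)
    (hp : p ∈ Set.Icc (0 : ℝ) 1) (hphat : phat ∈ Set.Icc (0 : ℝ) 1)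
    (hp₁ : p₁ ∈ Set.Icc (0 : ℝ) 1) (hphat₁ : phat₁ ∈ Set.Icc (0 : ℝ) 1)
    (hp₂ : p₂ ∈ Set.Icc (0 : ℝ) 1) (hphat₂ : phat₂ ∈ Set.Icc (0 : ℝ) 1)
    (hv₁ : v₁ ∈ Set.Icc (0 : ℝ) 1) (hv₂ : v₂ ∈ Set.Icc (0 : ℝ) 1) :
    |(2 * p * (1 - p) - 2 * v₁ * p₁ * (1 - p₁) - 2 * v₂ * p₂ * (1 - p₂))
        - (2 * phat * (1 - phat) - 2 * vhat₁ * phat₁ * (1 - phat₁)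
            - 2 * vhat₂ * phat₂ * (1 - phat₂))|
      ≤ 2 * |p - phat| + (1 / 2) * |v₁ - vhat₁| + 2 * v₁ * |p₁ - phat₁|
          + (1 / 2) * |v₂ - vhat₂| + 2 * v₂ * |p₂ - phat₂| := by
  have h := abs_impurityDecrease_sub_le (w₁ := vhat₁) (w₂ := vhat₂) hp hphat hp₁ hphat₁ hp₂ hphat₂
    hv₁.1 hv₂.1
  simp only [impurityDecrease, gini] at h
  convert h using 3 <;> ring

/-- Perturbation bound (Delta I decompose) for the Gini impurity decrease of a binary split:
comparing the impurity decrease computed from `(p, v₁, v₂, p₁, p₂)` with that computed from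
`(p̂, v̂₁, v̂₂, p̂₁, p̂₂)`. -/
theorem stmt17 (p phat p₁ phat₁ p₂ phat₂ v₁ v₂ vhat₁ vhat₂ : ℝ)
    (hp : p ∈ Set.Icc (0 : ℝ) 1) (hphat : phat ∈ Set.Icc (0 : ℝ) 1)
    (hp₁ : p₁ ∈ Set.Icc (0 : ℝ) 1) (hphat₁ : phat₁ ∈ Set.Icc (0 : ℝ) 1)
    (hp₂ : p₂ ∈ Set.Icc (0 : ℝ) 1) (hphat₂ : phat₂ ∈ Set.Icc (0 : ℝ) 1)
    (hv₁ : v₁ ∈ Set.Icc (0 : ℝ) 1) (hv₂ : v₂ ∈ Set.Icc (0 : ℝ) 1)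
    (hvhat₁ : vhat₁ ∈ Set.Icc (0 : ℝ) 1) (hvhat₂ : vhat₂ ∈ Set.Icc (0 : ℝ) 1)
    (hv : v₁ + v₂ = 1) (hvhat : vhat₁ + vhat₂ = 1) :
    |(2 * p * (1 - p) - 2 * v₁ * p₁ * (1 - p₁) - 2 * v₂ * p₂ * (1 - p₂))
        - (2 * phat * (1 - phat) - 2 * vhat₁ * phat₁ * (1 - phat₁)
            - 2 * vhat₂ * phat₂ * (1 - phat₂))|
      ≤ 2 * |p - phat| + (1 / 2) * |v₁ - vhat₁| + 2 * v₁ * |p₁ - phat₁|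
          + (1 / 2) * |v₂ - vhat₂| + 2 * v₂ * |p₂ - phat₂| :=
  stmt17_general p phat p₁ phat₁ p₂ phat₂ v₁ v₂ vhat₁ vhat₂ hp hphat hp₁ hphat₁ hp₂ hphat₂ hv₁ hv₂
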